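/- Let G : ℝ^{m×r} → ℝ be differentiable with L̃-Lipschitz gradient in the Frobenius norm, let ε > 0, let B ∈ ℝ^{m×r}, and let U ∈ ℝ^{m×r} be a random matrix whose entries are i.i.d. standard normal. Then E_U ‖ ((G(B + εU) − G(B − εU))/(2ε)) · U − ⟨∇G(B), U⟩_F · U ‖_F² ≤ (L̃² ε² / 4) · mr(mr+2)(mr+4). -/

import Mathlib

open MeasureTheory ProbabilityTheory Matrix
open scoped BigOperators

noncomputable section

attribute [local instance] Matrix.frobeniusNormedAddCommGroup Matrix.frobeniusNormedSpace

instance (m n : ℕ) : MeasurableSpace (Matrix (Fin m) (Fin n) ℝ) := MeasurableSpace.pi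

/-- Frobenius inner product `⟨A,B⟩_F = tr(A Bᵀ)`. -/
def finner {m n : ℕ} (A B : Matrix (Fin m) (Fin n) ℝ) : ℝ := (A * Bᵀ).trace

/-- `H ↦ ⟨G,H⟩_F` as a linear map. -/
def finnerLM {m n : ℕ} (G : Matrix (Fin m) (Fin n) ℝ) :
    Matrix (Fin m) (Fin n) ℝ →ₗ[ℝ] ℝ where
  toFun H := finner G H
  map_add' A B := by simp [finner, Matrix.transpose_add, Matrix.mul_add]
  map_smul' c A := by simp [finner, Matrix.transpose_smul, Matrix.mul_smul]

/-- `H ↦ ⟨G,H⟩_F` as a continuous linear map; `HasFDerivAt F (finnerCLM G) X` says that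
`G` is the gradient of `F` at `X` with respect to the Frobenius inner product. -/
def finnerCLM {m n : ℕ} (G : Matrix (Fin m) (Fin n) ℝ) :
    Matrix (Fin m) (Fin n) ℝ →L[ℝ] ℝ :=
  LinearMap.toContinuousLinearMap (finnerLM G)

/-- Law of an `m × r` random matrix with i.i.d. standard normal entries. -/
def gaussMat (m r : ℕ) : Measure (Matrix (Fin m) (Fin r) ℝ) :=
  Measure.pi fun _ : Fin m => Measure.pi fun _ : Fin r => gaussianReal 0 1

/-! The descent lemma for an `L̃`-Lipschitz gradient bounds both Taylor remainders
`G (B ± ε U) - G B ∓ ε ⟨∇G(B), U⟩_F` by `L̃ ε² ‖U‖² / 2`, so the central difference quotient is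
within `L̃ ε ‖U‖² / 2` of `⟨∇G(B), U⟩_F` and the integrand is at most `L̃² ε² ‖U‖⁶ / 4`.
With `n = mr`, `‖U‖²` is a sum of `n` independent `χ²₁` variables, and expanding its cube with
the Gaussian moments `E x² = 1`, `E x⁴ = 3`, `E x⁶ = 15` gives `E ‖U‖⁶ = n (n + 2) (n + 4)`. -/

open Real Set
open scoped NNReal

theorem norm_image_add_sub_sub_fderiv_le {E F : Type*} [NormedAddCommGroup E] [NormedSpace ℝ E]
    [NormedAddCommGroup F] [NormedSpace ℝ F] {f : E → F} {f' : E → E →L[ℝ] F} {L : ℝ}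
    (hf : ∀ x, HasFDerivAt f (f' x) x)
    (hf' : ∀ x y v, ‖f' x v - f' y v‖ ≤ L * ‖x - y‖ * ‖v‖) (x v : E) :
    ‖f (x + v) - f x - f' x v‖ ≤ L / 2 * ‖v‖ ^ 2 := by
  set g : ℝ → F := fun t => f (x + t • v) - f x - t • f' x v
  have hg : ∀ t, HasDerivAt g (f' (x + t • v) v - f' x v) t := fun t => by
    have hline : HasDerivAt (fun t : ℝ => x + t • v) v t :=
      ((hasDerivAt_id t).smul_const v).const_add x |>.congr_deriv (one_smul ℝ v)
    exact (((hf _).comp_hasDerivAt t hline).sub_const (f x)).sub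
      ((hasDerivAt_id t).smul_const (f' x v) |>.congr_deriv (one_smul ℝ _))
  have hB : ∀ t, HasDerivAt (fun t : ℝ => L / 2 * ‖v‖ ^ 2 * t ^ 2) (L * ‖v‖ ^ 2 * t) t :=
    fun t => ((hasDerivAt_pow 2 t).const_mul (L / 2 * ‖v‖ ^ 2)).congr_deriv (by ring)
  have hbound : ∀ t ∈ Ico (0 : ℝ) 1, ‖f' (x + t • v) v - f' x v‖ ≤ L * ‖v‖ ^ 2 * t := by
    rintro t ⟨ht, -⟩
    calc ‖f' (x + t • v) v - f' x v‖ ≤ L * ‖x + t • v - x‖ * ‖v‖ := hf' _ _ v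
      _ = L * ‖v‖ ^ 2 * t := by
          rw [add_sub_cancel_left, norm_smul, Real.norm_of_nonneg ht]; ring
  have := image_norm_le_of_norm_deriv_right_le_deriv_boundary
    (fun t _ => (hg t).continuousAt.continuousWithinAt) (fun t _ => (hg t).hasDerivWithinAt)
    (by simp [g]) hB hbound (right_mem_Icc.2 zero_le_one)
  simpa [g] using this

theorem abs_central_difference_sub_fderiv_le {E : Type*} [NormedAddCommGroup E]
    [NormedSpace ℝ E] {f : E → ℝ} {f' : E → E →L[ℝ] ℝ} {L : ℝ}
    (hf : ∀ x, HasFDerivAt f (f' x) x)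
    (hf' : ∀ x y v, ‖f' x v - f' y v‖ ≤ L * ‖x - y‖ * ‖v‖) (x v : E) {ε : ℝ} (hε : 0 < ε) :
    |(f (x + ε • v) - f (x - ε • v)) / (2 * ε) - f' x v| ≤ L * ε * ‖v‖ ^ 2 / 2 := by
  have hplus := norm_image_add_sub_sub_fderiv_le hf hf' x (ε • v)
  have hminus := norm_image_add_sub_sub_fderiv_le hf hf' x (-(ε • v))
  simp only [Real.norm_eq_abs, norm_neg, norm_smul, map_neg, map_smul, smul_eq_mul,
    ← sub_eq_add_neg, abs_of_pos hε] at hplus hminus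
  have hsplit : (f (x + ε • v) - f (x - ε • v)) / (2 * ε) - f' x v =
      ((f (x + ε • v) - f x - ε * f' x v) - (f (x - ε • v) - f x - -(ε * f' x v))) /
        (2 * ε) := by
    field_simp; ring
  rw [hsplit, abs_div, abs_of_pos (by positivity : (0 : ℝ) < 2 * ε),
    div_le_iff₀ (by positivity)]
  calc _ ≤ |f (x + ε • v) - f x - ε * f' x v| + |f (x - ε • v) - f x - -(ε * f' x v)| :=
        abs_sub _ _
    _ ≤ L / 2 * (ε * ‖v‖) ^ 2 + L / 2 * (ε * ‖v‖) ^ 2 := add_le_add hplus hminus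
    _ = L * ε * ‖v‖ ^ 2 / 2 * (2 * ε) := by ring

lemma finner_eq_sum {m n : ℕ} (A B : Matrix (Fin m) (Fin n) ℝ) :
    finner A B = ∑ c : Fin m × Fin n, A c.1 c.2 * B c.1 c.2 := by
  simp [finner, Matrix.trace, Matrix.mul_apply, Fintype.sum_prod_type]

lemma frobenius_norm_sq_eq_sum {m n : ℕ} (A : Matrix (Fin m) (Fin n) ℝ) :
    ‖A‖ ^ 2 = ∑ c : Fin m × Fin n, A c.1 c.2 ^ 2 := by
  rw [frobenius_norm_def, ← Real.rpow_natCast, ← Real.rpow_mul (by positivity),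
    Fintype.sum_prod_type]
  norm_num

lemma abs_finner_le {m n : ℕ} (A B : Matrix (Fin m) (Fin n) ℝ) : |finner A B| ≤ ‖A‖ * ‖B‖ := by
  refine abs_le_of_sq_le_sq ?_ (by positivity)
  rw [mul_pow, frobenius_norm_sq_eq_sum, frobenius_norm_sq_eq_sum, finner_eq_sum]
  exact Finset.sum_mul_sq_le_sq_mul_sq _ _ _

lemma finner_sub_left {m n : ℕ} (A B C : Matrix (Fin m) (Fin n) ℝ) :
    finner (A - B) C = finner A C - finner B C := by
  simp [finner, Matrix.sub_mul]

lemma integrable_pow_gaussianReal (μ : ℝ) (v : ℝ≥0) (k : ℕ) :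
    Integrable (fun x : ℝ => x ^ k) (gaussianReal μ v) :=
  ((memLp_id_gaussianReal k).integrable_norm_pow').mono' (by fun_prop)
    (ae_of_all _ fun x => by simp [norm_pow])

lemma integrable_pow_mul_gaussianPDFReal (μ : ℝ) {v : ℝ≥0} (hv : v ≠ 0) (k : ℕ) :
    Integrable (fun x : ℝ => x ^ k * gaussianPDFReal μ v x) := by
  have h := integrable_pow_gaussianReal μ v k
  rw [gaussianReal_of_var_ne_zero μ hv,
    integrable_withDensity_iff_integrable_smul' (measurable_gaussianPDF μ v)
      (ae_of_all _ fun _ => gaussianPDF_lt_top)] at h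
  refine h.congr (ae_of_all _ fun x => ?_)
  simp [toReal_gaussianPDF, mul_comm]

lemma hasDerivAt_gaussianPDFReal (μ : ℝ) (v : ℝ≥0) (x : ℝ) :
    HasDerivAt (gaussianPDFReal μ v) (-(x - μ) / v * gaussianPDFReal μ v x) x := by
  have h : HasDerivAt (fun y => -(y - μ) ^ 2 / (2 * v)) (-(x - μ) / v) x := by
    refine ((((hasDerivAt_id x).sub_const μ).pow 2).neg.div_const (2 * (v : ℝ))).congr_deriv ?_
    simp only [id, Nat.cast_ofNat]
    ring
  refine (h.exp.const_mul (√(2 * π * v))⁻¹).congr_deriv ?_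
  simp only [gaussianPDFReal]
  ring

lemma integral_pow_add_two_gaussianReal (k : ℕ) :
    ∫ x, x ^ (k + 2) ∂gaussianReal 0 1 = (k + 1) * ∫ x, x ^ k ∂gaussianReal 0 1 := by
  have hint (j : ℕ) := integrable_pow_mul_gaussianPDFReal 0 one_ne_zero j
  have hderiv : ∀ x : ℝ, HasDerivAt (fun x => x ^ (k + 1) * gaussianPDFReal 0 1 x)
      ((k + 1) * (x ^ k * gaussianPDFReal 0 1 x) - x ^ (k + 2) * gaussianPDFReal 0 1 x) x :=
    fun x => ((hasDerivAt_pow (k + 1) x).mul (hasDerivAt_gaussianPDFReal 0 1 x)).congr_deriv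
      (by simp; ring)
  have hzero := integral_eq_zero_of_hasDerivAt_of_integrable hderiv
    (((hint k).const_mul _).sub (hint (k + 2))) (hint (k + 1))
  rw [integral_sub ((hint k).const_mul _) (hint (k + 2)), integral_const_mul,
    sub_eq_zero] at hzero
  simp only [integral_gaussianReal_eq_integral_smul one_ne_zero, smul_eq_mul,
    mul_comm (gaussianPDFReal 0 1 _)]
  exact hzero.symm

lemma integral_pow_two_mul_gaussianReal (j : ℕ) :
    ∫ x, x ^ (2 * j) ∂gaussianReal 0 1 = ∏ i ∈ Finset.range j, (2 * i + 1 : ℝ) := by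
  induction j with
  | zero => simp
  | succ j ih =>
    rw [mul_add_one, integral_pow_add_two_gaussianReal, ih, Finset.prod_range_succ]
    push_cast; ring

section StandardGaussianPi

variable {ι : Type*} [Fintype ι]

lemma integrable_prod_pow_pi_gaussianReal (k : ι → ℕ) :
    Integrable (fun x : ι → ℝ => ∏ c, x c ^ k c) (Measure.pi fun _ : ι => gaussianReal 0 1) :=
  Integrable.fintype_prod fun c => integrable_pow_gaussianReal 0 1 (k c)

lemma sq_mul_sq_mul_sq_eq_prod_pow [DecidableEq ι] (x : ι → ℝ) (p q s : ι) :
    x p ^ 2 * x q ^ 2 * x s ^ 2 = ∏ c, x c ^ (2 * ((if p = c then 1 else 0) +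
      (if q = c then 1 else 0) + (if s = c then 1 else 0))) := by
  simp only [pow_mul, pow_add, Finset.prod_mul_distrib, Finset.prod_pow_boole,
    Finset.mem_univ, if_true]

lemma integrable_sq_mul_sq_mul_sq_pi_gaussianReal (p q s : ι) :
    Integrable (fun x : ι → ℝ => x p ^ 2 * x q ^ 2 * x s ^ 2)
      (Measure.pi fun _ : ι => gaussianReal 0 1) := by
  classical
  exact (integrable_prod_pow_pi_gaussianReal _).congr
    (ae_of_all _ fun x => (sq_mul_sq_mul_sq_eq_prod_pow x p q s).symm)

lemma integral_sq_mul_sq_mul_sq_pi_gaussianReal [DecidableEq ι] (p q s : ι) :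
    ∫ x, x p ^ 2 * x q ^ 2 * x s ^ 2 ∂Measure.pi (fun _ : ι => gaussianReal 0 1) =
      1 + (if p = q then 2 else 0) + (if q = s then 2 else 0) + (if p = s then 2 else 0) +
        (if p = q ∧ q = s then 8 else 0) := by
  simp_rw [sq_mul_sq_mul_sq_eq_prod_pow _ p q s]
  rw [integral_fintype_prod_eq_prod (fun c t => t ^ _)]
  simp only [integral_pow_two_mul_gaussianReal]
  rw [← Finset.prod_subset (Finset.subset_univ {p, q, s}) fun c _ hc => by
    simp only [Finset.mem_insert, Finset.mem_singleton, not_or] at hc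
    simp [Ne.symm hc.1, Ne.symm hc.2.1, Ne.symm hc.2.2]]
  rcases eq_or_ne p q with rfl | hpq
  · rcases eq_or_ne p s with rfl | hps
    · norm_num [Finset.prod_range_succ]
    · norm_num [hps, hps.symm, Finset.prod_range_succ]
  · rcases eq_or_ne q s with rfl | hqs
    · norm_num [hpq, hpq.symm, Finset.prod_range_succ]
    · rcases eq_or_ne p s with rfl | hps
      · norm_num [hpq, hpq.symm, Finset.prod_range_succ]
      · simp [hpq, hpq.symm, hqs, hqs.symm, hps, hps.symm]

lemma sum_pow_three_eq_sum_sum_sum {R : Type*} [CommSemiring R] (y : ι → R) :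
    (∑ c, y c) ^ 3 = ∑ p, ∑ q, ∑ s, y p * y q * y s := by
  rw [pow_three', Finset.sum_mul_sum, Finset.sum_mul]
  simp_rw [Finset.sum_mul_sum]

lemma integrable_sum_sq_pow_three_pi_gaussianReal :
    Integrable (fun x : ι → ℝ => (∑ c, x c ^ 2) ^ 3)
      (Measure.pi fun _ : ι => gaussianReal 0 1) := by
  simp_rw [sum_pow_three_eq_sum_sum_sum]
  exact integrable_finsetSum _ fun p _ => integrable_finsetSum _ fun q _ =>
    integrable_finsetSum _ fun s _ => integrable_sq_mul_sq_mul_sq_pi_gaussianReal p q s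

lemma integral_sum_sq_pow_three_pi_gaussianReal :
    ∫ x, (∑ c, x c ^ 2) ^ 3 ∂Measure.pi (fun _ : ι => gaussianReal 0 1) =
      Fintype.card ι * (Fintype.card ι + 2) * (Fintype.card ι + 4) := by
  classical
  have hint := integrable_sq_mul_sq_mul_sq_pi_gaussianReal (ι := ι)
  simp_rw [sum_pow_three_eq_sum_sum_sum]
  rw [integral_finsetSum _ fun p _ => integrable_finsetSum _ fun q _ =>
    integrable_finsetSum _ fun s _ => hint p q s]
  simp_rw [integral_finsetSum _ fun q _ => integrable_finsetSum _ fun s _ => hint _ q s,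
    integral_finsetSum _ fun s _ => hint _ _ s]
  simp only [integral_sq_mul_sq_mul_sq_pi_gaussianReal, ite_and, Finset.sum_add_distrib,
    Finset.sum_const, Finset.card_univ, nsmul_eq_mul, mul_one, smul_ite, smul_zero,
    Finset.sum_ite_eq, Finset.mem_univ, ↓reduceIte, Finset.sum_ite_irrel]
  ring

end StandardGaussianPi

lemma map_curry_pi_gaussianReal_eq_gaussMat (m r : ℕ) :
    (Measure.pi fun _ : Fin m × Fin r => gaussianReal 0 1).map
      (MeasurableEquiv.curry (Fin m) (Fin r) ℝ) = gaussMat m r := by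
  have h := Measure.infinitePi_map_curry fun (_ : Fin m) (_ : Fin r) => gaussianReal 0 1
  simp only [Measure.infinitePi_eq_pi] at h
  exact h

lemma integral_gaussMat_eq_integral_pi (m r : ℕ) (f : Matrix (Fin m) (Fin r) ℝ → ℝ) :
    ∫ U, f U ∂gaussMat m r = ∫ x, f (Matrix.of (Function.curry x))
      ∂Measure.pi fun _ : Fin m × Fin r => gaussianReal 0 1 := by
  rw [← map_curry_pi_gaussianReal_eq_gaussMat]
  exact integral_map_equiv (MeasurableEquiv.curry (Fin m) (Fin r) ℝ) f

lemma integrable_gaussMat_iff_integrable_pi (m r : ℕ) (f : Matrix (Fin m) (Fin r) ℝ → ℝ) :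
    Integrable f (gaussMat m r) ↔ Integrable (fun x => f (Matrix.of (Function.curry x)))
      (Measure.pi fun _ : Fin m × Fin r => gaussianReal 0 1) := by
  rw [← map_curry_pi_gaussianReal_eq_gaussMat]
  exact integrable_map_equiv (MeasurableEquiv.curry (Fin m) (Fin r) ℝ) f

lemma norm_pow_six_eq_sum_sq_pow_three {m r : ℕ} (U : Matrix (Fin m) (Fin r) ℝ) :
    ‖U‖ ^ 6 = (∑ c : Fin m × Fin r, U c.1 c.2 ^ 2) ^ 3 := by
  rw [← frobenius_norm_sq_eq_sum, ← pow_mul]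

lemma integrable_norm_pow_six_gaussMat (m r : ℕ) :
    Integrable (fun U => ‖U‖ ^ 6) (gaussMat m r) := by
  simp_rw [integrable_gaussMat_iff_integrable_pi, norm_pow_six_eq_sum_sq_pow_three,
    Matrix.of_apply, Function.curry_apply]
  exact integrable_sum_sq_pow_three_pi_gaussianReal

lemma integral_norm_pow_six_gaussMat (m r : ℕ) :
    ∫ U, ‖U‖ ^ 6 ∂gaussMat m r =
      ((m * r : ℕ) : ℝ) * (((m * r : ℕ) : ℝ) + 2) * (((m * r : ℕ) : ℝ) + 4) := by
  simp_rw [integral_gaussMat_eq_integral_pi, norm_pow_six_eq_sum_sq_pow_three, Matrix.of_apply,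
    Function.curry_apply]
  simpa using integral_sum_sq_pow_three_pi_gaussianReal (ι := Fin m × Fin r)

theorem stmt_18_general {m r : ℕ}
    (G : Matrix (Fin m) (Fin r) ℝ → ℝ) (Lt : ℝ)
    (gradG : Matrix (Fin m) (Fin r) ℝ → Matrix (Fin m) (Fin r) ℝ)
    (hderiv : ∀ B, HasFDerivAt G (finnerCLM (gradG B)) B)
    (hlip : ∀ B₁ B₂, ‖gradG B₁ - gradG B₂‖ ≤ Lt * ‖B₁ - B₂‖)
    (ε : ℝ) (hε : 0 < ε) (B : Matrix (Fin m) (Fin r) ℝ) :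
    ∫ U, ‖((G (B + ε • U) - G (B - ε • U)) / (2 * ε)) • U -
          finner (gradG B) U • U‖ ^ 2 ∂gaussMat m r ≤
      Lt ^ 2 * ε ^ 2 / 4 *
        (((m * r : ℕ) : ℝ) * (((m * r : ℕ) : ℝ) + 2) * (((m * r : ℕ) : ℝ) + 4)) := by
  have hgrad (X Y V : Matrix (Fin m) (Fin r) ℝ) :
      ‖finnerCLM (gradG X) V - finnerCLM (gradG Y) V‖ ≤ Lt * ‖X - Y‖ * ‖V‖ := calc
    _ = |finner (gradG X - gradG Y) V| := by rw [finner_sub_left]; rfl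
    _ ≤ ‖gradG X - gradG Y‖ * ‖V‖ := abs_finner_le _ _
    _ ≤ Lt * ‖X - Y‖ * ‖V‖ := by gcongr; exact hlip X Y
  have hpointwise (U : Matrix (Fin m) (Fin r) ℝ) :
      ‖((G (B + ε • U) - G (B - ε • U)) / (2 * ε)) • U - finner (gradG B) U • U‖ ^ 2 ≤
        Lt ^ 2 * ε ^ 2 / 4 * ‖U‖ ^ 6 := by
    have herr : |(G (B + ε • U) - G (B - ε • U)) / (2 * ε) - finner (gradG B) U| ≤
        Lt * ε * ‖U‖ ^ 2 / 2 :=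
      abs_central_difference_sub_fderiv_le hderiv hgrad B U hε
    rw [← sub_smul, norm_smul, Real.norm_eq_abs, mul_pow]
    calc _ ≤ (Lt * ε * ‖U‖ ^ 2 / 2) ^ 2 * ‖U‖ ^ 2 := by gcongr
      _ = Lt ^ 2 * ε ^ 2 / 4 * ‖U‖ ^ 6 := by ring
  calc _ ≤ ∫ U, Lt ^ 2 * ε ^ 2 / 4 * ‖U‖ ^ 6 ∂gaussMat m r :=
        integral_mono_of_nonneg (ae_of_all _ fun U => by positivity)
          ((integrable_norm_pow_six_gaussMat m r).const_mul _) (ae_of_all _ hpointwise)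
    _ = _ := by rw [integral_const_mul, integral_norm_pow_six_gaussMat]

/-- mean-squared error of the finite-difference estimator against the
linearization: `E_U‖∇̂G(B) − ⟨∇G(B),U⟩_F · U‖_F² ≤ (L̃²ε²/4)·mr(mr+2)(mr+4)`. -/
theorem stmt_18 {m r : ℕ} (hm : 0 < m) (hr : 0 < r)
    (G : Matrix (Fin m) (Fin r) ℝ → ℝ) (Lt : ℝ)
    (gradG : Matrix (Fin m) (Fin r) ℝ → Matrix (Fin m) (Fin r) ℝ)
    (hderiv : ∀ B, HasFDerivAt G (finnerCLM (gradG B)) B)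
    (hlip : ∀ B₁ B₂, ‖gradG B₁ - gradG B₂‖ ≤ Lt * ‖B₁ - B₂‖)
    (ε : ℝ) (hε : 0 < ε) (B : Matrix (Fin m) (Fin r) ℝ) :
    ∫ U, ‖((G (B + ε • U) - G (B - ε • U)) / (2 * ε)) • U -
          finner (gradG B) U • U‖ ^ 2 ∂gaussMat m r ≤
      Lt ^ 2 * ε ^ 2 / 4 *
        (((m * r : ℕ) : ℝ) * (((m * r : ℕ) : ℝ) + 2) * (((m * r : ℕ) : ℝ) + 4)) :=
  stmt_18_general G Lt gradG hderiv hlip ε hε B
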